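/- arXiv:2401.03709 — 2 statements merged into one kernel-verified Lean document; each statement's English description precedes it below -/
import Mathlib

section
/- Every prime divisor of ω divides n. -/
/-!
The norm `ν = ∑_{i<n} F^i` satisfies `(F - 1) ∘ ν = ν ∘ (F - 1) = F^n - 1 = 0`, and `ν x ≡ n • x`
modulo the image of `F - 1`. An element of `ker β` is invariant and lies in the image of `F - 1`,
so `ν` maps it both to `0` and to `n • x`; as `N` is torsion-free, `ker β = 0`. Every class in
`coker β` is `n`-torsion, since `n • x ≡ ν x` with `ν x` invariant. Hence `ω = |coker β|`, and a
finitely generated abelian group of exponent dividing `n` has order dividing a power of `n`.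
-/

open Module

/-- The endomorphism `F - 1` of `N`. -/
def frobSub {N : Type*} [AddCommGroup N] (F : AddAut N) : N →+ N :=
  AddEquiv.toAddMonoidHom (F : N ≃+ N) - AddMonoidHom.id N

/-- The invariants `N^F = ker (F - 1)`. -/
def invariantsOf {N : Type*} [AddCommGroup N] (F : AddAut N) : AddSubgroup N :=
  (frobSub F).ker

/-- The coinvariants `N_F = N / im (F - 1)`. -/
abbrev coinvariantsOf {N : Type*} [AddCommGroup N] (F : AddAut N) :=
  N ⧸ (frobSub F).range

/-- The map `β : N^F → N_F` induced by the identity of `N`. -/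
def betaHom {N : Type*} [AddCommGroup N] (F : AddAut N) :
    ↥(invariantsOf F) →+ coinvariantsOf F :=
  (QuotientAddGroup.mk' (frobSub F).range).comp (invariantsOf F).subtype

/-- The cokernel of `β`. -/
abbrev betaCoker {N : Type*} [AddCommGroup N] (F : AddAut N) :=
  coinvariantsOf F ⧸ (betaHom F).range

/-- `ω = |coker β| / |ker β|`. -/
noncomputable def omegaOf {N : Type*} [AddCommGroup N] (F : AddAut N) : ℕ :=
  Nat.card (betaCoker F) / Nat.card ↥(betaHom F).ker

/-- `τ = rank N - rank N^F`. -/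
noncomputable def tauOf {N : Type*} [AddCommGroup N] (F : AddAut N) : ℕ :=
  Module.finrank ℤ N - Module.finrank ℤ ↥(invariantsOf F)

theorem Nat.Prime.dvd_of_dvd_card_of_forall_nsmul_eq_zero {G : Type*} [AddCommGroup G]
    [AddGroup.FG G] {p n : ℕ} (hp : p.Prime) (hG : ∀ g : G, n • g = 0)
    (hpG : p ∣ Nat.card G) : p ∣ n :=
  hp.dvd_of_dvd_pow (hpG.trans (card_dvd_exponent_nsmul_rank' G hG))

section Norm

variable {N : Type*} [AddCommGroup N] (F : AddAut N)

lemma frobSub_apply (x : N) : frobSub F x = F x - x := rfl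

lemma mem_invariantsOf {x : N} : x ∈ invariantsOf F ↔ F x = x := sub_eq_zero

/-- The group law of `AddAut N` is composition, so `i • F` is the iterate `F^i`. -/
def normOf (n : ℕ) : N →+ N := ∑ i ∈ Finset.range n, (i • F).toAddMonoidHom

lemma normOf_apply (n : ℕ) (x : N) : normOf F n x = ∑ i ∈ Finset.range n, (i • F) x := by
  simp [normOf]

lemma frobSub_normOf_apply (n : ℕ) (x : N) : frobSub F (normOf F n x) = (n • F) x - x := by
  rw [frobSub_apply, normOf_apply, map_sum, ← Finset.sum_sub_distrib]
  simpa [succ_nsmul'] using Finset.sum_range_sub (fun i => (i • F) x) n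

lemma normOf_frobSub_apply (n : ℕ) (x : N) : normOf F n (frobSub F x) = (n • F) x - x := by
  rw [frobSub_apply, normOf_apply]
  simpa [succ_nsmul] using Finset.sum_range_sub (fun i => (i • F) x) n

lemma normOf_apply_of_mem_invariantsOf (n : ℕ) {x : N} (hx : x ∈ invariantsOf F) :
    normOf F n x = n • x := by
  have hFi (i : ℕ) : (i • F) x = x := by
    rw [← sub_eq_zero, ← normOf_frobSub_apply, hx, map_zero]
  simp [normOf_apply, hFi]

lemma normOf_apply_sub_nsmul_mem_range (n : ℕ) (x : N) :
    normOf F n x - n • x ∈ (frobSub F).range := by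
  have hsum : normOf F n x - n • x = ∑ i ∈ Finset.range n, ((i • F) x - x) := by
    simp [normOf_apply, Finset.sum_sub_distrib]
  rw [hsum]
  exact AddSubgroup.sum_mem _ fun i _ => ⟨normOf F i x, frobSub_normOf_apply F i x⟩

variable {F} {n : ℕ} (hFn : n • F = 0)
include hFn

lemma normOf_mem_invariantsOf (x : N) : normOf F n x ∈ invariantsOf F := by
  rw [mem_invariantsOf, ← sub_eq_zero, ← frobSub_apply, frobSub_normOf_apply, hFn]
  exact sub_self x

lemma normOf_eq_zero_of_mem_range {x : N} (hx : x ∈ (frobSub F).range) : normOf F n x = 0 := by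
  obtain ⟨y, rfl⟩ := hx
  rw [normOf_frobSub_apply, hFn]
  exact sub_self y

end Norm

section Beta

variable {N : Type*} [AddCommGroup N] {F : AddAut N} {n : ℕ}

lemma betaHom_apply_eq_zero_iff (x : invariantsOf F) :
    betaHom F x = 0 ↔ (x : N) ∈ (frobSub F).range :=
  QuotientAddGroup.eq_zero_iff _

lemma ker_betaHom_eq_bot [IsAddTorsionFree N] (hn : n ≠ 0) (hFn : n • F = 0) :
    (betaHom F).ker = ⊥ := by
  refine (AddSubgroup.eq_bot_iff_forall _).2 fun x hx => Subtype.ext ?_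
  have hx0 : normOf F n x = 0 :=
    normOf_eq_zero_of_mem_range hFn ((betaHom_apply_eq_zero_iff x).1 hx)
  rw [normOf_apply_of_mem_invariantsOf F n x.2] at hx0
  exact (nsmul_eq_zero_iff_right hn).1 hx0

lemma nsmul_betaCoker_eq_zero (hFn : n • F = 0) (q : betaCoker F) : n • q = 0 := by
  obtain ⟨q', rfl⟩ := QuotientAddGroup.mk'_surjective _ q
  obtain ⟨x, rfl⟩ := QuotientAddGroup.mk'_surjective _ q'
  rw [← map_nsmul, ← map_nsmul, QuotientAddGroup.mk'_apply, QuotientAddGroup.eq_zero_iff]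
  refine ⟨⟨normOf F n x, normOf_mem_invariantsOf hFn x⟩, QuotientAddGroup.eq.2 ?_⟩
  rw [neg_add_eq_sub, ← neg_sub]
  exact neg_mem (normOf_apply_sub_nsmul_mem_range F n x)

lemma omegaOf_eq_card_betaCoker [IsAddTorsionFree N] (hn : n ≠ 0) (hFn : n • F = 0) :
    omegaOf F = Nat.card (betaCoker F) := by
  rw [omegaOf, ker_betaHom_eq_bot hn hFn, AddSubgroup.card_bot, Nat.div_one]

end Beta

/-- Every prime divisor of `ω` divides `n`, the exact order of `F`. -/
theorem prime_dvd_omega_dvd_order {N : Type*} [AddCommGroup N]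
    [Module.Free ℤ N] [Module.Finite ℤ N]
    (F : AddAut N) (n : ℕ) (hn : 1 ≤ n) (hord : addOrderOf F = n) :
    ∀ p : ℕ, p.Prime → p ∣ omegaOf F → p ∣ n := by
  intro p hp hpω
  have hFn : n • F = 0 := hord ▸ addOrderOf_nsmul_eq_zero F
  have : IsAddTorsionFree N := Module.isTorsionFree_int_iff_isAddTorsionFree.mp inferInstance
  have : AddGroup.FG N := Module.Finite.iff_addGroup_fg.mp inferInstance
  rw [omegaOf_eq_card_betaCoker (by omega) hFn] at hpω
  exact hp.dvd_of_dvd_card_of_forall_nsmul_eq_zero (nsmul_betaCoker_eq_zero hFn) hpω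
end

section
/- If τ = 3, then ω ∈ {2, 4, 6, 8}. -/
/-!
Since `F` has finite order, a fixed vector `x = F y - y` in the image of `F - 1` vanishes:
`F^k y = y + k • x`, so `n • x = 0`. Hence `β` is injective and `ω = |N / (N^F + (F - 1) N)|`,
the order of the cokernel of the injective map `F̄ - 1` on the lattice `N / N^F` of rank `τ`.
So `ω = |det (F̄ - 1)| = |χ(1)|` for the characteristic polynomial `χ` of `F̄`, a monic integer
cubic whose complex roots are roots of unity, and `χ(1) ≠ 0`. Now `|χ(1)| = ∏ |1 - z| ≤ 8`, and
`χ(-1) = 0`: on the unit circle `(-1 - z) * conj (1 - z) = conj z - z`, so `χ(-1) χ(1)` is a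
product of an odd number of purely imaginary numbers. Thus `χ(1) ≡ χ(-1) = 0 mod 2`.
-/

open Module

open Polynomial ComplexConjugate

namespace Module.End

variable {R M : Type*} [CommRing R] [AddCommGroup M] [Module R M] (f : End R M)

lemma pow_apply_of_apply_sub_self {x y : M} (hx : f x = x) (hy : f y - y = x) (k : ℕ) :
    (f ^ k) y = y + k • x := by
  induction k with
  | zero => simp
  | succ k ih =>
    rw [pow_succ', mul_apply, ih, map_add, map_nsmul, hx, succ_nsmul, ← hy]
    abel

lemma disjoint_ker_range_sub_one [IsAddTorsionFree M] {n : ℕ} (hn : n ≠ 0) (hf : f ^ n = 1) :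
    Disjoint (LinearMap.ker (f - 1)) (LinearMap.range (f - 1)) := by
  rw [Submodule.disjoint_def]
  rintro _ hx ⟨y, rfl⟩
  have h := f.pow_apply_of_apply_sub_self (sub_eq_zero.mp hx) rfl n
  rw [hf, one_apply, left_eq_add, nsmul_eq_zero_iff] at h
  exact h.resolve_right hn

lemma ker_sub_one_le_comap : LinearMap.ker (f - 1) ≤ (LinearMap.ker (f - 1)).comap f := by
  intro x hx
  rw [Submodule.mem_comap, sub_eq_zero.mp hx]
  exact hx

def quotFixed : End R (M ⧸ LinearMap.ker (f - 1)) :=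
  (LinearMap.ker (f - 1)).mapQ _ f f.ker_sub_one_le_comap

lemma quotFixed_sub_one_comp_mkQ :
    (f.quotFixed - 1) ∘ₗ (LinearMap.ker (f - 1)).mkQ =
      (LinearMap.ker (f - 1)).mkQ ∘ₗ (f - 1) :=
  rfl

lemma range_quotFixed_sub_one :
    LinearMap.range (f.quotFixed - 1) =
      (LinearMap.range (f - 1)).map (LinearMap.ker (f - 1)).mkQ := by
  rw [← LinearMap.range_comp_of_range_eq_top _ (Submodule.range_mkQ _),
    quotFixed_sub_one_comp_mkQ, LinearMap.range_comp]

lemma injective_quotFixed_sub_one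
    (h : Disjoint (LinearMap.ker (f - 1)) (LinearMap.range (f - 1))) :
    Function.Injective ⇑(f.quotFixed - 1) := by
  rw [← LinearMap.ker_eq_bot, Submodule.eq_bot_iff]
  intro z hz
  obtain ⟨x, rfl⟩ := Submodule.mkQ_surjective _ z
  have hx : (f - 1) x ∈ LinearMap.ker (f - 1) := by
    rw [← Submodule.Quotient.mk_eq_zero, ← Submodule.mkQ_apply, ← LinearMap.comp_apply,
      ← quotFixed_sub_one_comp_mkQ]
    exact hz
  exact (Submodule.Quotient.mk_eq_zero _).mpr
    (Submodule.disjoint_def.mp h _ hx (LinearMap.mem_range_self _ x))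

lemma quotFixed_pow_eq_one {n : ℕ} (hf : f ^ n = 1) : f.quotFixed ^ n = 1 := by
  rw [quotFixed, ← Submodule.mapQ_pow]
  ext x
  simp [hf]

lemma charpoly_eval_one_ne_zero [IsDomain R] [Module.Free R M] [Module.Finite R M]
    (hf : Function.Injective ⇑(f - 1)) : f.charpoly.eval 1 ≠ 0 := fun h => by
  obtain ⟨v, hv⟩ := ((hasEigenvalue_iff_isRoot_charpoly f 1).mpr h).exists_hasEigenvector
  exact hv.2 (hf (by simp [hv.apply_eq_smul]))

lemma pow_eq_one_of_mem_aroots_charpoly {A : Type*} [Field A] [Algebra R A] [Module.Free R M]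
    [Module.Finite R M] {n : ℕ} (hf : f ^ n = 1) {z : A} (hz : z ∈ f.charpoly.aroots A) :
    z ^ n = 1 := by
  rw [aroots_def, ← LinearMap.charpoly_baseChange, mem_roots'] at hz
  obtain ⟨v, hv⟩ := ((hasEigenvalue_iff_isRoot_charpoly (f.baseChange A) z).mpr hz.2).pow n
    |>.exists_hasEigenvector
  have hv1 := hv.apply_eq_smul
  rw [← LinearMap.baseChange_pow, hf, LinearMap.baseChange_one, one_apply] at hv1
  exact smul_left_injective A hv.2 (by simpa using hv1.symm)

end Module.End

instance Module.free_quotient_ker {R M M' : Type*} [CommRing R] [IsDomain R]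
    [IsPrincipalIdealRing R] [AddCommGroup M] [Module R M] [AddCommGroup M'] [Module R M']
    [Module.Free R M'] [Module.Finite R M'] (φ : M →ₗ[R] M') :
    Module.Free R (M ⧸ LinearMap.ker φ) :=
  Module.Free.of_equiv (LinearMap.quotKerEquivRange φ).symm

namespace Module.End

variable {M : Type*} [AddCommGroup M] [Module.Free ℤ M] [Module.Finite ℤ M]

lemma natCard_quotient_range_eq_natAbs_det (f : End ℤ M) (hf : Function.Injective f) :
    Nat.card (M ⧸ LinearMap.range f) = (LinearMap.det f).natAbs :=
  ((LinearMap.range f).natAbs_det_equiv (LinearEquiv.ofInjective f hf)).symm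

lemma natAbs_charpoly_eval_one (f : End ℤ M) :
    (f.charpoly.eval 1).natAbs = (LinearMap.det (f - 1)).natAbs := by
  rw [LinearMap.eval_charpoly, map_one, ← neg_sub, ← neg_one_smul ℤ (f - 1), LinearMap.det_smul,
    Int.natAbs_mul, Int.natAbs_pow, Int.natAbs_neg, Int.natAbs_one, one_pow, one_mul]

lemma natCard_quotient_ker_sup_range (f : End ℤ M)
    (h : Disjoint (LinearMap.ker (f - 1)) (LinearMap.range (f - 1))) :
    Nat.card (M ⧸ (LinearMap.ker (f - 1) ⊔ LinearMap.range (f - 1))) =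
      (f.quotFixed.charpoly.eval 1).natAbs := by
  rw [natAbs_charpoly_eval_one, ← natCard_quotient_range_eq_natAbs_det _
    (f.injective_quotFixed_sub_one h), range_quotFixed_sub_one]
  exact Nat.card_congr (Submodule.quotientQuotientEquivQuotientSup _ _).toEquiv.symm

end Module.End

namespace Polynomial

variable {f : ℤ[X]}

lemma Monic.cast_eval_eq_prod_aroots (hf : f.Monic) (x : ℤ) :
    ((f.eval x : ℤ) : ℂ) = ((f.aroots ℂ).map ((x : ℂ) - ·)).prod := by
  rw [← (IsAlgClosed.splits _).aeval_eq_prod_aroots_of_monic hf]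
  simpa using (aeval_algebraMap_apply_eq_algebraMap_eval (A := ℂ) x f).symm

lemma Monic.card_aroots_complex (hf : f.Monic) : Multiset.card (f.aroots ℂ) = f.natDegree := by
  rw [aroots_def, ← (IsAlgClosed.splits _).natDegree_eq_card_roots, hf.natDegree_map]

lemma natAbs_eval_one_le_two_pow (hf : f.Monic) (hroots : ∀ z ∈ f.aroots ℂ, ‖z‖ ≤ 1) :
    (f.eval 1).natAbs ≤ 2 ^ f.natDegree := by
  have hprod := hf.cast_eval_eq_prod_aroots 1
  rw [Int.cast_one] at hprod
  have hnorm : ‖((f.eval 1 : ℤ) : ℂ)‖ ≤ 2 ^ f.natDegree := calc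
    _ = ((f.aroots ℂ).map fun z => ‖1 - z‖).prod := by
      rw [hprod, ← normHom_apply, map_multiset_prod, Multiset.map_map]; rfl
    _ ≤ ((f.aroots ℂ).map fun _ => (2 : ℝ)).prod :=
      Multiset.prod_map_le_prod_map₀ _ _ (fun _ _ => norm_nonneg _) fun z hz => by
        linarith [norm_sub_le (1 : ℂ) z, norm_one (α := ℂ), hroots z hz]
    _ = 2 ^ f.natDegree := by simp [hf.card_aroots_complex]
  rw [Complex.norm_intCast, ← Int.cast_abs, Int.abs_eq_natAbs] at hnorm
  exact_mod_cast hnorm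

lemma eval_neg_one_mul_eval_one_eq_zero (hf : f.Monic) (hodd : Odd f.natDegree)
    (hroots : ∀ z ∈ f.aroots ℂ, ‖z‖ = 1) : f.eval (-1) * f.eval 1 = 0 := by
  set w : ℂ := ((f.aroots ℂ).map fun z => conj z - z).prod
  have hw : ((f.eval (-1) * f.eval 1 : ℤ) : ℂ) = w := by
    rw [Int.cast_mul, ← map_intCast (starRingEnd ℂ) (f.eval 1), hf.cast_eval_eq_prod_aroots,
      hf.cast_eval_eq_prod_aroots, map_multiset_prod, Multiset.map_map,
      ← Multiset.prod_map_mul]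
    refine congrArg _ (Multiset.map_congr rfl fun z hz => ?_)
    have hzz : z * conj z = 1 := by
      rw [Complex.mul_conj', hroots z hz]; norm_num
    simp only [Function.comp_apply, map_sub, map_one, Int.cast_neg, Int.cast_one]
    linear_combination hzz
  have hconj : conj w = -w := by
    rw [map_multiset_prod, Multiset.map_map, ← neg_one_mul, ← hodd.neg_one_pow,
      ← hf.card_aroots_complex, ← Multiset.card_map (fun z => conj z - z),
      ← Multiset.prod_map_neg]
    simp
  have hreal : conj w = w := by rw [← hw]; exact map_intCast (starRingEnd ℂ) _
  have hw0 : w = 0 := by linear_combination (hconj - hreal) / 2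
  exact_mod_cast hw.trans hw0

lemma natAbs_eval_one_mem_of_natDegree_eq_three (hf : f.Monic) (hdeg : f.natDegree = 3)
    (hroots : ∀ z ∈ f.aroots ℂ, ‖z‖ = 1) (hne : f.eval 1 ≠ 0) :
    (f.eval 1).natAbs ∈ ({2, 4, 6, 8} : Set ℕ) := by
  have hle := natAbs_eval_one_le_two_pow hf fun z hz => (hroots z hz).le
  have hzero := eval_neg_one_mul_eval_one_eq_zero hf (by rw [hdeg]; decide) hroots
  have heven : (2 : ℤ) ∣ f.eval 1 := by
    have h := sub_dvd_eval_sub 1 (-1) f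
    rw [(mul_eq_zero.mp hzero).resolve_right hne, sub_zero] at h
    simpa using h
  rw [hdeg] at hle
  simp only [Set.mem_insert_iff, Set.mem_singleton_iff]
  omega

end Polynomial

namespace AddAut

variable {N : Type*} [AddCommGroup N] (F : AddAut N)

def toIntEnd : End ℤ N := (F : N →+ N).toIntLinearMap

lemma toIntEnd_nsmul (k : ℕ) : (k • F).toIntEnd = F.toIntEnd ^ k := by
  induction k with
  | zero => rfl
  | succ k ih => rw [succ_nsmul, pow_succ, ← ih]; rfl

end AddAut

section

variable {N : Type*} [AddCommGroup N] (F : AddAut N)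

lemma finrank_invariantsOf :
    finrank ℤ (invariantsOf F) = finrank ℤ (LinearMap.ker (F.toIntEnd - 1)) :=
  (AddEquiv.refl _).toIntLinearEquiv.finrank_eq

lemma injective_betaHom (h : Disjoint (LinearMap.ker (F.toIntEnd - 1))
    (LinearMap.range (F.toIntEnd - 1))) : Function.Injective (betaHom F) := by
  refine (injective_iff_map_eq_zero _).mpr fun x hx => Subtype.ext ?_
  exact Submodule.disjoint_def.mp h _ x.2 ((QuotientAddGroup.eq_zero_iff _).mp hx)

lemma omegaOf_eq_natCard_betaCoker (h : Function.Injective (betaHom F)) :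
    omegaOf F = Nat.card (betaCoker F) := by
  rw [omegaOf, (betaHom F).ker_eq_bot_iff.mpr h, AddSubgroup.card_bot, Nat.div_one]

lemma range_betaHom :
    (betaHom F).range = (invariantsOf F ⊔ (frobSub F).range).map (QuotientAddGroup.mk' _) := by
  rw [AddSubgroup.map_sup, QuotientAddGroup.map_mk'_self, sup_bot_eq, betaHom,
    AddMonoidHom.range_comp, AddSubgroup.range_subtype]

lemma natCard_betaCoker : Nat.card (betaCoker F) =
    Nat.card (N ⧸ (LinearMap.ker (F.toIntEnd - 1) ⊔ LinearMap.range (F.toIntEnd - 1))) := by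
  have hsup : invariantsOf F ⊔ (frobSub F).range =
      (LinearMap.ker (F.toIntEnd - 1) ⊔ LinearMap.range (F.toIntEnd - 1)).toAddSubgroup := by
    rw [Submodule.sup_toAddSubgroup]
    rfl
  rw [betaCoker, range_betaHom]
  exact (Nat.card_congr (QuotientAddGroup.quotientQuotientEquivQuotient _ _ le_sup_right).toEquiv
    ).trans (by rw [hsup]; rfl)

end

/-- If `τ = 3`, then `ω ∈ {2, 4, 6, 8}`. -/
theorem omega_of_tau_eq_three {N : Type*} [AddCommGroup N]
    [Module.Free ℤ N] [Module.Finite ℤ N]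
    (F : AddAut N) (n : ℕ) (hn : 1 ≤ n) (hFn : n • F = 0)
    (hτ : tauOf F = 3) :
    omegaOf F ∈ ({2, 4, 6, 8} : Set ℕ) := by
  rw [tauOf, finrank_invariantsOf] at hτ
  set f := F.toIntEnd
  have : IsAddTorsionFree N := Module.isTorsionFree_int_iff_isAddTorsionFree.mp inferInstance
  have hfn : f ^ n = 1 := by rw [← F.toIntEnd_nsmul, hFn]; rfl
  have hdisj := f.disjoint_ker_range_sub_one (by omega) hfn
  have hrank : finrank ℤ (N ⧸ LinearMap.ker (f - 1)) = 3 := by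
    have := (LinearMap.ker (f - 1)).finrank_quotient_add_finrank
    omega
  rw [omegaOf_eq_natCard_betaCoker F (injective_betaHom F hdisj), natCard_betaCoker,
    f.natCard_quotient_ker_sup_range hdisj]
  refine natAbs_eval_one_mem_of_natDegree_eq_three (LinearMap.charpoly_monic _)
    (by rw [LinearMap.charpoly_natDegree, hrank]) (fun z hz => ?_)
    (f.quotFixed.charpoly_eval_one_ne_zero (f.injective_quotFixed_sub_one hdisj))
  exact Complex.norm_eq_one_of_pow_eq_one
    (f.quotFixed.pow_eq_one_of_mem_aroots_charpoly (f.quotFixed_pow_eq_one hfn) hz) (by omega)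
end
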